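/- arXiv:2206.03795 — 3 statements merged into one kernel-verified Lean document; each statement's English description precedes it below -/
import Mathlib

section
/- Let $N, M$ be positive integers, let $A$ be an $N imes N$ real symmetric positive definite matrix, let $B$ be an $N imes M$ real matrix, and let $P$ and $P_0$ be $M imes M$ real symmetric positive semidefinite matrices. Then $\log\det(A + BPB^T) \le \log\det(A + BP_0B^T) + \mathrm{Tr}\big(B^T(A + BP_0B^T)^{-1}B\,(P - P_0)\big)$. -/
/-!
The right-hand side is the tangent plane of the concave map `X ↦ log det X` at
`S = A + B P₀ Bᵀ`, evaluated at `T = A + B P Bᵀ`, since `tr (Bᵀ S⁻¹ B (P - P₀)) = tr (S⁻¹ (T - S))`.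
Factoring `S⁻¹ = Dᴴ D`, the tangent-plane inequality for positive definite `S, T` becomes
`log det M ≤ tr M - n` for the positive definite `M = D T Dᴴ`, which is `log λ ≤ λ - 1`
summed over the eigenvalues of `M`.
-/

namespace Matrix

variable {n : Type*} [Fintype n] [DecidableEq n]

theorem PosDef.log_det_le_trace_sub_card {M : Matrix n n ℝ} (hM : M.PosDef) :
    Real.log M.det ≤ M.trace - Fintype.card n := by
  have hpos := hM.eigenvalues_pos
  rw [hM.isHermitian.det_eq_prod_eigenvalues, hM.isHermitian.trace_eq_sum_eigenvalues]
  simp only [RCLike.ofReal_real_eq_id, id_eq]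
  rw [Real.log_prod fun i _ => (hpos i).ne', Fintype.card_eq_sum_ones, Nat.cast_sum,
    ← Finset.sum_sub_distrib]
  exact Finset.sum_le_sum fun i _ => by simpa using Real.log_le_sub_one_of_pos (hpos i)

open scoped MatrixOrder ComplexOrder in
theorem PosDef.exists_isUnit_det_eq_conjTranspose_mul_self {𝕜 : Type*} [RCLike 𝕜]
    {M : Matrix n n 𝕜} (hM : M.PosDef) : ∃ D : Matrix n n 𝕜, IsUnit D.det ∧ M = Dᴴ * D := by
  obtain ⟨D, rfl⟩ := CStarAlgebra.nonneg_iff_eq_star_mul_self.mp hM.posSemidef.nonneg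
  refine ⟨D, isUnit_iff_ne_zero.mpr fun hD => hM.det_pos.ne' ?_, rfl⟩
  rw [det_mul, hD, mul_zero]

theorem PosDef.log_det_le_log_det_add_trace_inv_mul_sub {S T : Matrix n n ℝ} (hS : S.PosDef)
    (hT : T.PosDef) : Real.log T.det ≤ Real.log S.det + (S⁻¹ * (T - S)).trace := by
  obtain ⟨D, hD, hSinv⟩ := hS.inv.exists_isUnit_det_eq_conjTranspose_mul_self
  have hM : (D * T * Dᴴ).PosDef :=
    hT.mul_mul_conjTranspose_same <|
      vecMul_injective_iff_isUnit.mpr <| (isUnit_iff_isUnit_det _).mpr hD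
  have hdet : (D * T * Dᴴ).det = T.det / S.det := by
    rw [det_mul, det_mul, mul_comm, ← mul_assoc, ← det_mul, ← hSinv, det_nonsing_inv,
      Ring.inverse_eq_inv', div_eq_inv_mul]
  have htr : (D * T * Dᴴ).trace = (S⁻¹ * T).trace := by
    rw [trace_mul_cycle, hSinv, mul_assoc]
  have hS1 : S⁻¹ * S = 1 := nonsing_inv_mul S hS.det_pos.ne'.isUnit
  have hlog := hM.log_det_le_trace_sub_card
  rw [hdet, Real.log_div hT.det_pos.ne' hS.det_pos.ne', htr] at hlog
  rw [mul_sub, hS1, trace_sub, trace_one]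
  linarith

end Matrix

open Matrix

theorem logdet_affine_upper_bound_general {N M : ℕ}
    (A : Matrix (Fin N) (Fin N) ℝ) (B : Matrix (Fin N) (Fin M) ℝ)
    (P P₀ : Matrix (Fin M) (Fin M) ℝ)
    (hA : A.PosDef) (hP : P.PosSemidef) (hP₀ : P₀.PosSemidef) :
    Real.log (A + B * P * Bᵀ).det ≤
      Real.log (A + B * P₀ * Bᵀ).det +
        (Bᵀ * (A + B * P₀ * Bᵀ)⁻¹ * B * (P - P₀)).trace := by
  have hBt : Bᴴ = Bᵀ := conjTranspose_eq_transpose_of_trivial B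
  have hS : (A + B * P₀ * Bᵀ).PosDef :=
    hA.add_posSemidef (hBt ▸ hP₀.mul_mul_conjTranspose_same B)
  have hT : (A + B * P * Bᵀ).PosDef :=
    hA.add_posSemidef (hBt ▸ hP.mul_mul_conjTranspose_same B)
  have htr : (Bᵀ * (A + B * P₀ * Bᵀ)⁻¹ * B * (P - P₀)).trace =
      ((A + B * P₀ * Bᵀ)⁻¹ * ((A + B * P * Bᵀ) - (A + B * P₀ * Bᵀ))).trace := by
    rw [add_sub_add_left_eq_sub, ← Matrix.sub_mul, ← Matrix.mul_sub]
    simp only [Matrix.mul_assoc]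
    rw [trace_mul_comm Bᵀ]
    simp only [Matrix.mul_assoc]
  exact htr ▸ hS.log_det_le_log_det_add_trace_inv_mul_sub hT

/-- Lemma 1: first-order Taylor expansion of the concave function
`P ↦ log det (A + B P Bᵀ)` gives an affine upper bound. -/
theorem logdet_affine_upper_bound {N M : ℕ} (hN : 0 < N) (hM : 0 < M)
    (A : Matrix (Fin N) (Fin N) ℝ) (B : Matrix (Fin N) (Fin M) ℝ)
    (P P₀ : Matrix (Fin M) (Fin M) ℝ)
    (hA : A.PosDef) (hP : P.PosSemidef) (hP₀ : P₀.PosSemidef) :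
    Real.log (A + B * P * Bᵀ).det ≤
      Real.log (A + B * P₀ * Bᵀ).det +
        (Bᵀ * (A + B * P₀ * Bᵀ)⁻¹ * B * (P - P₀)).trace :=
  logdet_affine_upper_bound_general A B P P₀ hA hP hP₀
end

section
/- Let $N, M$ be positive integers, let $Y$ and $\bar Y$ be $N\times N$ complex Hermitian positive definite matrices, and let $V$ and $\bar V$ be arbitrary $N\times M$ complex matrices. Then $\log\det(I + VV^H Y^{-1}) \ge \log\det(I + \bar V\bar V^H \bar Y^{-1}) - \mathrm{Re}\,\mathrm{Tr}\big(\bar V\bar V^H\bar Y^{-1}\big) + 2\,\mathrm{Re}\,\mathrm{Tr}\big(\bar V^H\bar Y^{-1}V\big) - \mathrm{Re}\,\mathrm{Tr}\Big(\big(\bar Y^{-1} - (\bar V\bar V^H + \bar Y)^{-1}\big)^H\,(VV^H + Y)\Big)$, where both $\det(I + VV^HY^{-1})$ and $\det(I + \bar V\bar V^H\bar Y^{-1})$ are positive real numbers (so the statement compares their natural logarithms as real numbers). -/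
/-!
Put `F = 1 + Vᴴ Y⁻¹ V` and `S = V Vᴴ + Y`. Sylvester's identity gives
`det (1 + V Vᴴ Y⁻¹) = det F`, and Woodbury's gives `F⁻¹ = 1 - Vᴴ S⁻¹ V`, the minimum of the
mean-square-error matrices `E(U) = 1 - Uᴴ V - Vᴴ U + Uᴴ S U`: completing the square,
`E(U) = F⁻¹ + (U - S⁻¹ V)ᴴ S (U - S⁻¹ V)`. Applying `log x ≤ x - 1` to the eigenvalues of
`C F⁻¹ Cᴴ`, where `W = Cᴴ C`, yields for every `W > 0` and every `U`
`log det F ≥ log det W + M - Re tr (W E(U))`.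
The lemma is this bound at `W = 1 + V̄ᴴ Ȳ⁻¹ V̄` and `U = S̄⁻¹ V̄` (the choices that make it tight
at `(V̄, Ȳ)`), where `tr (W E(U))` is affine in `V Vᴴ + Y` and linear in `V`.
-/

open Matrix ComplexOrder

namespace Matrix

variable {m n : Type*} [Fintype n] [DecidableEq n]

section CommRing

variable {α : Type*} [CommRing α]

theorem inv_one_add_mul_inv_mul [Fintype m] [DecidableEq m] {Y : Matrix n n α}
    (A : Matrix n m α) (B : Matrix m n α) (hY : IsUnit Y) (hS : IsUnit (A * B + Y)) :
    (1 + B * Y⁻¹ * A)⁻¹ = 1 - B * (A * B + Y)⁻¹ * A := by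
  have hYinv : IsUnit Y⁻¹ := isUnit_nonsing_inv_iff.mpr hY
  have hinv : Y⁻¹⁻¹ = Y := nonsing_inv_nonsing_inv Y ((isUnit_iff_isUnit_det Y).mp hY)
  have h := add_mul_mul_inv_eq_sub 1 B Y⁻¹ A isUnit_one hYinv
    (by rwa [hinv, inv_one, Matrix.mul_one, add_comm])
  rwa [hinv, inv_one, Matrix.mul_one, Matrix.one_mul, Matrix.mul_one, add_comm Y] at h

theorem inv_mul_mul_mul_inv_eq_inv_sub_inv [Fintype m] {Y : Matrix n n α} (A : Matrix n m α)
    (B : Matrix m n α) (hY : IsUnit Y) (hS : IsUnit (A * B + Y)) :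
    (A * B + Y)⁻¹ * A * (B * Y⁻¹) = Y⁻¹ - (A * B + Y)⁻¹ := by
  obtain ⟨_⟩ := hY.nonempty_invertible
  obtain ⟨_⟩ := hS.nonempty_invertible
  calc (A * B + Y)⁻¹ * A * (B * Y⁻¹) = (A * B + Y)⁻¹ * ((A * B + Y) - Y) * Y⁻¹ := by
        rw [add_sub_cancel_right]; simp only [Matrix.mul_assoc]
    _ = Y⁻¹ - (A * B + Y)⁻¹ := by
        rw [Matrix.mul_sub, inv_mul_of_invertible, Matrix.sub_mul, Matrix.one_mul,
          Matrix.mul_assoc, mul_inv_of_invertible, Matrix.mul_one]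

theorem one_add_mul_inv_mul_mul_mul_inv [Fintype m] [DecidableEq m] {Y : Matrix n n α}
    (A : Matrix n m α) (B : Matrix m n α) (hY : IsUnit Y) (hS : IsUnit (A * B + Y)) :
    (1 + B * Y⁻¹ * A) * B * (A * B + Y)⁻¹ = B * Y⁻¹ := by
  obtain ⟨_⟩ := hY.nonempty_invertible
  obtain ⟨_⟩ := hS.nonempty_invertible
  calc (1 + B * Y⁻¹ * A) * B * (A * B + Y)⁻¹
        = B * Y⁻¹ * (A * B + Y) * (A * B + Y)⁻¹ := by
        simp only [Matrix.add_mul, Matrix.mul_add, Matrix.one_mul, Matrix.mul_assoc,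
          inv_mul_of_invertible, Matrix.mul_one, add_comm]
    _ = B * Y⁻¹ := by rw [Matrix.mul_assoc, mul_inv_of_invertible, Matrix.mul_one]

variable [StarRing α]

theorem conjTranspose_sub_inv_mul_mul_mul_sub_inv_mul {S : Matrix n n α} (hS : S.IsHermitian)
    (hSu : IsUnit S) (V U : Matrix n m α) :
    (U - S⁻¹ * V)ᴴ * S * (U - S⁻¹ * V) =
      Uᴴ * S * U - Uᴴ * V - Vᴴ * U + Vᴴ * S⁻¹ * V := by
  obtain ⟨_⟩ := hSu.nonempty_invertible
  simp only [conjTranspose_sub, conjTranspose_mul, hS.inv.eq, Matrix.sub_mul, Matrix.mul_sub,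
    Matrix.mul_assoc, mul_inv_cancel_left_of_invertible, inv_mul_cancel_left_of_invertible]
  abel

end CommRing

section RCLike

variable {𝕜 : Type*} [RCLike 𝕜]

open scoped MatrixOrder in
lemma PosSemidef.re_trace_mul_nonneg {A B : Matrix n n 𝕜} (hA : A.PosSemidef)
    (hB : B.PosSemidef) : 0 ≤ RCLike.re (A * B).trace := by
  obtain ⟨C, rfl⟩ := CStarAlgebra.nonneg_iff_eq_star_mul_self.mp hA.nonneg
  rw [star_eq_conjTranspose, Matrix.mul_assoc, trace_mul_comm]
  exact (RCLike.nonneg_iff.mp (hB.mul_mul_conjTranspose_same C).trace_nonneg).1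

lemma PosDef.ofReal_re_det {A : Matrix n n 𝕜} (hA : A.PosDef) :
    ((RCLike.re A.det : ℝ) : 𝕜) = A.det := by
  obtain ⟨x, -, hx⟩ := RCLike.pos_iff_exists_ofReal.mp hA.det_pos
  rw [← hx, RCLike.ofReal_re]

lemma PosDef.re_det_pos {A : Matrix n n 𝕜} (hA : A.PosDef) : 0 < RCLike.re A.det :=
  (RCLike.pos_iff.mp hA.det_pos).1

lemma PosDef.log_re_det_le_re_trace_sub_card {P : Matrix n n 𝕜} (hP : P.PosDef) :
    Real.log (RCLike.re P.det) ≤ RCLike.re P.trace - Fintype.card n := by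
  have hpos := hP.eigenvalues_pos
  rw [hP.isHermitian.det_eq_prod_eigenvalues, hP.isHermitian.trace_eq_sum_eigenvalues,
    ← RCLike.ofReal_prod, ← RCLike.ofReal_sum, RCLike.ofReal_re, RCLike.ofReal_re,
    Real.log_prod fun i _ => (hpos i).ne']
  calc ∑ i, Real.log (hP.isHermitian.eigenvalues i)
      ≤ ∑ i, (hP.isHermitian.eigenvalues i - 1) :=
        Finset.sum_le_sum fun i _ => Real.log_le_sub_one_of_pos (hpos i)
    _ = _ := by simp [Finset.sum_sub_distrib]

open scoped MatrixOrder in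
theorem PosDef.log_re_det_sub_log_re_det_le {W F : Matrix n n 𝕜} (hW : W.PosDef)
    (hF : F.PosDef) :
    Real.log (RCLike.re W.det) - Real.log (RCLike.re F.det) ≤
      RCLike.re (W * F⁻¹).trace - Fintype.card n := by
  obtain ⟨C, hC, rfl⟩ :=
    CStarAlgebra.isStrictlyPositive_iff_eq_star_mul_self.mp hW.isStrictlyPositive
  have hP : (C * F⁻¹ * Cᴴ).PosDef :=
    hF.inv.mul_mul_conjTranspose_same (vecMul_injective_iff_isUnit.mpr hC)
  have hdet :
      (C * F⁻¹ * Cᴴ).det = ((RCLike.re (star C * C).det / RCLike.re F.det : ℝ) : 𝕜) := by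
    rw [RCLike.ofReal_div, hW.ofReal_re_det, hF.ofReal_re_det, det_mul, det_mul, det_mul,
      det_nonsing_inv, Ring.inverse_eq_inv', star_eq_conjTranspose]
    ring
  have htr : (C * F⁻¹ * Cᴴ).trace = (star C * C * F⁻¹).trace := by
    rw [trace_mul_cycle, star_eq_conjTranspose]
  have h := hP.log_re_det_le_re_trace_sub_card
  rwa [hdet, htr, RCLike.ofReal_re, Real.log_div hW.re_det_pos.ne' hF.re_det_pos.ne'] at h

variable [Fintype m] [DecidableEq m]

lemma PosDef.one_add_conjTranspose_mul_inv_mul {Y : Matrix n n 𝕜} (hY : Y.PosDef)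
    (V : Matrix n m 𝕜) : (1 + Vᴴ * Y⁻¹ * V).PosDef :=
  PosDef.one.add_posSemidef (hY.inv.posSemidef.conjTranspose_mul_mul_same V)

/-- For `S = V Vᴴ + Y` this is the error covariance `𝔼[(s - Uᴴ x)(s - Uᴴ x)ᴴ]` of the
linear estimate `Uᴴ x` of `s` from `x = V s + z`, where `s`, `z` are independent with
covariances `1`, `Y`. -/
def mseMatrix (S : Matrix n n 𝕜) (V U : Matrix n m 𝕜) : Matrix m m 𝕜 :=
  1 - Uᴴ * V - Vᴴ * U + Uᴴ * S * U

theorem mseMatrix_eq_inv_add {Y : Matrix n n 𝕜} (hY : Y.PosDef) (V U : Matrix n m 𝕜) :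
    mseMatrix (V * Vᴴ + Y) V U = (1 + Vᴴ * Y⁻¹ * V)⁻¹ +
      (U - (V * Vᴴ + Y)⁻¹ * V)ᴴ * (V * Vᴴ + Y) * (U - (V * Vᴴ + Y)⁻¹ * V) := by
  have hS : (V * Vᴴ + Y).PosDef :=
    PosDef.posSemidef_add (posSemidef_self_mul_conjTranspose V) hY
  rw [inv_one_add_mul_inv_mul V Vᴴ hY.isUnit hS.isUnit,
    conjTranspose_sub_inv_mul_mul_mul_sub_inv_mul hS.isHermitian hS.isUnit, mseMatrix]
  abel

theorem log_re_det_add_card_sub_le {Y : Matrix n n 𝕜} {W : Matrix m m 𝕜} (hY : Y.PosDef)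
    (hW : W.PosDef) (V U : Matrix n m 𝕜) :
    Real.log (RCLike.re W.det) + Fintype.card m
        - RCLike.re (W * mseMatrix (V * Vᴴ + Y) V U).trace ≤
      Real.log (RCLike.re (1 + Vᴴ * Y⁻¹ * V).det) := by
  have hS : (V * Vᴴ + Y).PosDef :=
    PosDef.posSemidef_add (posSemidef_self_mul_conjTranspose V) hY
  have hgibbs := hW.log_re_det_sub_log_re_det_le (hY.one_add_conjTranspose_mul_inv_mul V)
  have hgap := hW.posSemidef.re_trace_mul_nonneg
    (hS.posSemidef.conjTranspose_mul_mul_same (U - (V * Vᴴ + Y)⁻¹ * V))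
  rw [mseMatrix_eq_inv_add hY, Matrix.mul_add, trace_add, map_add]
  linarith

theorem re_trace_one_add_mul_mseMatrix {Ybar : Matrix n n 𝕜} (hYbar : Ybar.PosDef)
    (S : Matrix n n 𝕜) (V Vbar : Matrix n m 𝕜) :
    RCLike.re ((1 + Vbarᴴ * Ybar⁻¹ * Vbar) *
        mseMatrix S V ((Vbar * Vbarᴴ + Ybar)⁻¹ * Vbar)).trace =
      Fintype.card m + RCLike.re (Vbar * Vbarᴴ * Ybar⁻¹).trace
        - 2 * RCLike.re (Vbarᴴ * Ybar⁻¹ * V).trace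
        + RCLike.re ((Ybar⁻¹ - (Vbar * Vbarᴴ + Ybar)⁻¹)ᴴ * S).trace := by
  set Sbar := Vbar * Vbarᴴ + Ybar
  set F := 1 + Vbarᴴ * Ybar⁻¹ * Vbar
  set U := Sbar⁻¹ * Vbar
  have hSbar : Sbar.PosDef :=
    PosDef.posSemidef_add (posSemidef_self_mul_conjTranspose Vbar) hYbar
  have hFU : F * Uᴴ = Vbarᴴ * Ybar⁻¹ := by
    rw [conjTranspose_mul, hSbar.isHermitian.inv.eq, ← Matrix.mul_assoc,
      one_add_mul_inv_mul_mul_mul_inv Vbar Vbarᴴ hYbar.isUnit hSbar.isUnit]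
  have hUFU : U * (F * Uᴴ) = (Ybar⁻¹ - Sbar⁻¹)ᴴ := by
    rw [hFU, conjTranspose_sub, hYbar.isHermitian.inv.eq, hSbar.isHermitian.inv.eq,
      ← inv_mul_mul_mul_inv_eq_inv_sub_inv Vbar Vbarᴴ hYbar.isUnit hSbar.isUnit]
  have htr_F : F.trace = Fintype.card m + (Vbar * Vbarᴴ * Ybar⁻¹).trace := by
    rw [trace_add, trace_one, trace_mul_cycle]
  have htr_UV : (F * (Uᴴ * V)).trace = (Vbarᴴ * Ybar⁻¹ * V).trace := by
    rw [← Matrix.mul_assoc, hFU]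
  have htr_VU : (F * (Vᴴ * U)).trace = star (Vbarᴴ * Ybar⁻¹ * V).trace := by
    rw [← htr_UV, ← trace_conjTranspose, conjTranspose_mul, conjTranspose_mul,
      conjTranspose_conjTranspose, (hYbar.one_add_conjTranspose_mul_inv_mul Vbar).isHermitian.eq]
    exact trace_mul_comm _ _
  have htr_US : (F * (Uᴴ * S * U)).trace = ((Ybar⁻¹ - Sbar⁻¹)ᴴ * S).trace := by
    rw [← hUFU, Matrix.mul_assoc U, trace_mul_comm U]
    simp only [Matrix.mul_assoc]
  have hre_VU : RCLike.re (F * (Vᴴ * U)).trace = RCLike.re (Vbarᴴ * Ybar⁻¹ * V).trace := by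
    rw [htr_VU, RCLike.star_def, RCLike.conj_re]
  simp only [mseMatrix, Matrix.mul_add, Matrix.mul_sub, Matrix.mul_one, trace_add, trace_sub,
    map_add, map_sub, htr_F, htr_UV, htr_US, hre_VU, RCLike.natCast_re]
  ring

end RCLike

end Matrix

theorem logdet_lower_bound_complex_general {N M : ℕ}
    (Y Ybar : Matrix (Fin N) (Fin N) ℂ) (V Vbar : Matrix (Fin N) (Fin M) ℂ)
    (hY : Y.PosDef) (hYbar : Ybar.PosDef) :
    0 < ((1 + V * Vᴴ * Y⁻¹).det).re ∧ ((1 + V * Vᴴ * Y⁻¹).det).im = 0 ∧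
    0 < ((1 + Vbar * Vbarᴴ * Ybar⁻¹).det).re ∧
    ((1 + Vbar * Vbarᴴ * Ybar⁻¹).det).im = 0 ∧
    Real.log ((1 + V * Vᴴ * Y⁻¹).det).re ≥
      Real.log ((1 + Vbar * Vbarᴴ * Ybar⁻¹).det).re
        - ((Vbar * Vbarᴴ * Ybar⁻¹).trace).re
        + 2 * ((Vbarᴴ * Ybar⁻¹ * V).trace).re
        - (((Ybar⁻¹ - (Vbar * Vbarᴴ + Ybar)⁻¹)ᴴ * (V * Vᴴ + Y)).trace).re := by
  have hdet {Z : Matrix (Fin N) (Fin N) ℂ} (B : Matrix (Fin N) (Fin M) ℂ) :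
      (1 + B * Bᴴ * Z⁻¹).det = (1 + Bᴴ * Z⁻¹ * B).det := by
    rw [Matrix.mul_assoc, det_one_add_mul_comm, Matrix.mul_assoc]
  have hF := hY.one_add_conjTranspose_mul_inv_mul V
  have hFbar := hYbar.one_add_conjTranspose_mul_inv_mul Vbar
  have hbound := log_re_det_add_card_sub_le hY hFbar V ((Vbar * Vbarᴴ + Ybar)⁻¹ * Vbar)
  rw [re_trace_one_add_mul_mseMatrix hYbar] at hbound
  simp only [RCLike.re_to_complex] at hbound
  rw [hdet V, hdet Vbar]
  obtain ⟨hpos, him⟩ := Complex.pos_iff.mp hF.det_pos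
  obtain ⟨hposbar, himbar⟩ := Complex.pos_iff.mp hFbar.det_pos
  exact ⟨hpos, him.symm, hposbar, himbar.symm, by linarith⟩

/-- Lemma 2 of the paper (complex case): lower bound on `log det (I + V Vᴴ Y⁻¹)`.
Both determinants are positive real numbers, and the inequality compares their
natural logarithms (taken of the real parts, the imaginary parts being zero). -/
theorem logdet_lower_bound_complex {N M : ℕ} (hN : 0 < N) (hM : 0 < M)
    (Y Ybar : Matrix (Fin N) (Fin N) ℂ) (V Vbar : Matrix (Fin N) (Fin M) ℂ)
    (hY : Y.PosDef) (hYbar : Ybar.PosDef) :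
    0 < ((1 + V * Vᴴ * Y⁻¹).det).re ∧ ((1 + V * Vᴴ * Y⁻¹).det).im = 0 ∧
    0 < ((1 + Vbar * Vbarᴴ * Ybar⁻¹).det).re ∧
    ((1 + Vbar * Vbarᴴ * Ybar⁻¹).det).im = 0 ∧
    Real.log ((1 + V * Vᴴ * Y⁻¹).det).re ≥
      Real.log ((1 + Vbar * Vbarᴴ * Ybar⁻¹).det).re
        - ((Vbar * Vbarᴴ * Ybar⁻¹).trace).re
        + 2 * ((Vbarᴴ * Ybar⁻¹ * V).trace).re
        - (((Ybar⁻¹ - (Vbar * Vbarᴴ + Ybar)⁻¹)ᴴ * (V * Vᴴ + Y)).trace).re :=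
  logdet_lower_bound_complex_general Y Ybar V Vbar hY hYbar
end

section
/- Let $n, m$ be positive integers, let $D$ and $\bar D$ be $n\times n$ real symmetric positive definite matrices, let $H$ and $\bar H$ be $n\times m$ real matrices, and let $P$ and $\bar P$ be $m\times m$ real symmetric positive semidefinite matrices. Set $\bar V = \bar H\,\bar P^{1/2}$, where $\bar P^{1/2}$ is the positive semidefinite square root of $\bar P$. Then $\tfrac{1}{2}\log_2\det\big(I + D^{-1}HPH^T\big) \ge \tfrac{1}{2}\log_2\det\big(I + \bar D^{-1}\bar H\bar P\bar H^T\big) - \tfrac{1}{2\ln 2}\mathrm{Tr}\big(\bar V\bar V^T\bar D^{-1}\big) + \tfrac{1}{\ln 2}\mathrm{Tr}\big(\bar V^T\bar D^{-1}H P^{1/2}\big) - \tfrac{1}{2\ln 2}\mathrm{Tr}\Big(\big(\bar D^{-1} - (\bar V\bar V^T + \bar D)^{-1}\big)^T\,(HPH^T + D)\Big)$, where $P^{1/2}$ is the positive semidefinite square root of $P$. -/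
/-!
Write `S = V Vᵀ + Y` and `W = I + Vᵀ Y⁻¹ V`, and similarly `S̄`, `W̄` for `(V̄, Ȳ)`. By the
Weinstein–Aronszajn identity `det (I + Y⁻¹ V Vᵀ) = det W`, and `W⁻¹ = I - Vᵀ S⁻¹ V`. Applying
`log x ≤ x - 1` to the eigenvalues of `W^{-1/2} W̄ W^{-1/2}` gives
`log det W ≥ log det W̄ + m - tr W̄ + tr (W̄ Vᵀ S⁻¹ V)`, and completing the square,
`tr (W̄ Eᵀ S E) ≥ 0` for `E = S̄⁻¹ V̄ - S⁻¹ V`, bounds the last trace from below by terms that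
the push-through identity `W̄ V̄ᵀ S̄⁻¹ = V̄ᵀ Ȳ⁻¹` turns into those of the surrogate.
The rate bound is the case `V = H P^{1/2}`, `Y = D`, where `V Vᵀ = H P Hᵀ`.
-/

open Matrix

open scoped ComplexOrder in
/-- The positive semidefinite square root, as defined in the older Mathlib
(`Matrix.PosSemidef.sqrt`, since removed). -/
noncomputable def Matrix.PosSemidef.sqrt {n R : Type*} [Fintype n] [RCLike R] [DecidableEq n]
    {A : Matrix n n R} (hA : A.PosSemidef) : Matrix n n R :=
  hA.1.eigenvectorUnitary.1 * diagonal ((↑) ∘ Real.sqrt ∘ hA.1.eigenvalues) *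
    (star hA.1.eigenvectorUnitary : Matrix n n R)

namespace Matrix

section RCLike

open scoped ComplexOrder

variable {n 𝕜 : Type*} [Fintype n] [RCLike 𝕜] [DecidableEq n] {A : Matrix n n 𝕜}

lemma PosSemidef.sqrt_mul_sqrt_self (hA : A.PosSemidef) : hA.sqrt * hA.sqrt = A := by
  set U : Matrix n n 𝕜 := ↑hA.1.eigenvectorUnitary
  set d : n → 𝕜 := (↑) ∘ Real.sqrt ∘ hA.1.eigenvalues
  have hd : diagonal d * diagonal d = diagonal ((↑) ∘ hA.1.eigenvalues) := by
    rw [diagonal_mul_diagonal]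
    congr 1
    funext i
    simp only [d, Function.comp_apply, ← RCLike.ofReal_mul,
      Real.mul_self_sqrt (hA.eigenvalues_nonneg i)]
  have hU : star U * U = 1 := Unitary.coe_star_mul_self hA.1.eigenvectorUnitary
  conv_rhs => rw [hA.1.spectral_theorem, Unitary.conjStarAlgAut_apply]
  calc U * diagonal d * star U * (U * diagonal d * star U)
      = U * diagonal d * (star U * U) * diagonal d * star U := by simp only [Matrix.mul_assoc]
    _ = U * (diagonal d * diagonal d) * star U := by rw [hU, Matrix.mul_one, Matrix.mul_assoc U]
    _ = _ := by rw [hd]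

lemma PosSemidef.posSemidef_sqrt (hA : A.PosSemidef) : hA.sqrt.PosSemidef := by
  have hd := (posSemidef_diagonal_iff (d := ((↑) ∘ Real.sqrt ∘ hA.1.eigenvalues : n → 𝕜))).mpr
    fun i => by simp [Real.sqrt_nonneg]
  simpa [Matrix.PosSemidef.sqrt, Matrix.star_eq_conjTranspose] using
    hd.mul_mul_conjTranspose_same (hA.1.eigenvectorUnitary : Matrix n n 𝕜)

end RCLike

lemma IsHermitian.transpose_eq_self {n : Type*} {A : Matrix n n ℝ} (hA : A.IsHermitian) :
    Aᵀ = A :=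
  (isHermitian_iff_isSymm.mp hA).eq

lemma PosSemidef.transpose_sqrt {m : Type*} [Fintype m] [DecidableEq m] {P : Matrix m m ℝ}
    (hP : P.PosSemidef) : hP.sqrtᵀ = hP.sqrt :=
  hP.posSemidef_sqrt.isHermitian.transpose_eq_self

lemma PosSemidef.mul_sqrt_mul_transpose {n m : Type*} [Fintype m] [DecidableEq m]
    {P : Matrix m m ℝ} (hP : P.PosSemidef) (H : Matrix n m ℝ) :
    H * hP.sqrt * (H * hP.sqrt)ᵀ = H * P * Hᵀ := by
  rw [transpose_mul, hP.transpose_sqrt, Matrix.mul_assoc, ← Matrix.mul_assoc hP.sqrt,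
    hP.sqrt_mul_sqrt_self, ← Matrix.mul_assoc]

variable {n m : Type*} [Fintype n] [DecidableEq n]

lemma PosSemidef.trace_mul_nonneg {A B : Matrix n n ℝ} (hA : A.PosSemidef) (hB : B.PosSemidef) :
    0 ≤ (A * B).trace := by
  have hR : (hA.sqrtᵀ * B * hA.sqrt).PosSemidef := by
    simpa using hB.conjTranspose_mul_mul_same hA.sqrt
  calc 0 ≤ (hA.sqrtᵀ * B * hA.sqrt).trace := hR.trace_nonneg
    _ = (A * B).trace := by
      rw [hA.transpose_sqrt, trace_mul_cycle, hA.sqrt_mul_sqrt_self]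

lemma PosDef.card_add_log_det_le_trace {C : Matrix n n ℝ} (hC : C.PosDef) :
    Fintype.card n + Real.log C.det ≤ C.trace := by
  have htr : C.trace = ∑ i, hC.1.eigenvalues i := by
    simpa using hC.1.trace_eq_sum_eigenvalues
  have hdet : Real.log C.det = ∑ i, Real.log (hC.1.eigenvalues i) := by
    rw [hC.1.det_eq_prod_eigenvalues]
    exact Real.log_prod fun i _ => (hC.eigenvalues_pos i).ne'
  rw [htr, hdet, ← Finset.card_univ, ← nsmul_one, ← Finset.sum_const, ← Finset.sum_add_distrib]
  gcongr with i
  linarith [Real.log_le_sub_one_of_pos (hC.eigenvalues_pos i)]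

lemma PosDef.card_add_log_det_sub_log_det_le_trace_mul_inv {A B : Matrix n n ℝ}
    (hA : A.PosDef) (hB : B.PosDef) :
    Fintype.card n + Real.log A.det - Real.log B.det ≤ (A * B⁻¹).trace := by
  have hBi := hB.inv.posSemidef
  set R := hBi.sqrt
  have hRR : R * R = B⁻¹ := hBi.sqrt_mul_sqrt_self
  have hdetB : B⁻¹.det = B.det⁻¹ := by rw [det_nonsing_inv, Ring.inverse_eq_inv']
  have hR : IsUnit R := by
    rw [isUnit_iff_isUnit_det, isUnit_iff_ne_zero]
    intro h
    have : B⁻¹.det = 0 := by rw [← hRR, det_mul, h, zero_mul]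
    exact inv_ne_zero hB.det_pos.ne' (hdetB ▸ this)
  have hC : (star R * A * R).PosDef := (IsUnit.posDef_star_left_conjugate_iff hR).mpr hA
  rw [star_eq_conjTranspose, conjTranspose_eq_transpose_of_trivial, hBi.transpose_sqrt] at hC
  have htr : (R * A * R).trace = (A * B⁻¹).trace := by
    rw [trace_mul_cycle, hRR, trace_mul_comm]
  have hdet : (R * A * R).det = A.det * B.det⁻¹ := by
    rw [det_mul, det_mul, ← hdetB, ← hRR, det_mul]
    ring
  have := hC.card_add_log_det_le_trace
  rw [htr, hdet, Real.log_mul hA.det_pos.ne' (inv_ne_zero hB.det_pos.ne'), Real.log_inv] at this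
  linarith

variable [Fintype m] [DecidableEq m]

lemma PosDef.two_mul_trace_sub_trace_le_trace_inv {S : Matrix n n ℝ} {W : Matrix m m ℝ}
    (hS : S.PosDef) (hW : W.PosSemidef) (X B : Matrix n m ℝ) :
    2 * (W * (Bᵀ * X)).trace - (W * (Bᵀ * S * B)).trace ≤ (W * (Xᵀ * S⁻¹ * X)).trace := by
  have hSt : Sᵀ = S := hS.isHermitian.transpose_eq_self
  have hSit : S⁻¹ᵀ = S⁻¹ := by rw [transpose_nonsing_inv, hSt]
  have hSu : IsUnit S.det := hS.det_pos.ne'.isUnit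
  set E := B - S⁻¹ * X
  have hE : Eᵀ * S * E = Bᵀ * S * B - Bᵀ * X - Xᵀ * B + Xᵀ * S⁻¹ * X := by
    simp only [E, transpose_sub, transpose_mul, hSit, Matrix.sub_mul, Matrix.mul_sub,
      Matrix.mul_assoc, nonsing_inv_mul_cancel_left _ _ hSu,
      mul_nonsing_inv_cancel_left _ _ hSu]
    abel
  have hsymm : (W * (Xᵀ * B)).trace = (W * (Bᵀ * X)).trace := by
    rw [← trace_transpose, transpose_mul, transpose_mul, transpose_transpose,
      hW.isHermitian.transpose_eq_self, trace_mul_comm]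
  have hnonneg : 0 ≤ (W * (Eᵀ * S * E)).trace :=
    hW.trace_mul_nonneg (by simpa using hS.posSemidef.conjTranspose_mul_mul_same E)
  rw [hE] at hnonneg
  simp only [Matrix.mul_add, Matrix.mul_sub, trace_add, trace_sub, hsymm] at hnonneg
  linarith

lemma det_one_add_inv_mul_mul_transpose {α : Type*} [CommRing α] (Y : Matrix n n α)
    (V : Matrix n m α) :
    (1 + Y⁻¹ * (V * Vᵀ)).det = (1 + Vᵀ * Y⁻¹ * V).det := by
  rw [← Matrix.mul_assoc, det_one_add_mul_comm, Matrix.mul_assoc]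

lemma transpose_mul_inv_mul_mul_transpose_add {α : Type*} [CommRing α] {Y : Matrix n n α}
    (hY : IsUnit Y.det) (V : Matrix n m α) :
    Vᵀ * Y⁻¹ * (V * Vᵀ + Y) = (1 + Vᵀ * Y⁻¹ * V) * Vᵀ := by
  rw [Matrix.mul_add, Matrix.add_mul, Matrix.one_mul, Matrix.mul_assoc _ Y⁻¹ Y,
    nonsing_inv_mul _ hY, Matrix.mul_one, ← Matrix.mul_assoc, add_comm]

lemma inv_one_add_transpose_mul_inv_mul {α : Type*} [CommRing α] {Y : Matrix n n α}
    (V : Matrix n m α) (hY : IsUnit Y.det) (hS : IsUnit (V * Vᵀ + Y).det) :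
    (1 + Vᵀ * Y⁻¹ * V)⁻¹ = 1 - Vᵀ * (V * Vᵀ + Y)⁻¹ * V := by
  refine inv_eq_right_inv ?_
  rw [Matrix.mul_sub, Matrix.mul_one, ← Matrix.mul_assoc, ← Matrix.mul_assoc,
    ← transpose_mul_inv_mul_mul_transpose_add hY, mul_nonsing_inv_cancel_right _ _ hS,
    add_sub_cancel_right]

/-- The paper's concave minorant `r̂` of `log det (I + Y⁻¹ V Vᵀ)`, tight at `(V, Y) = (Vb, Yb)`. -/
noncomputable def logDetSurrogate (Vb : Matrix n m ℝ) (Yb : Matrix n n ℝ) (V : Matrix n m ℝ)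
    (Y : Matrix n n ℝ) : ℝ :=
  Real.log (1 + Yb⁻¹ * (Vb * Vbᵀ)).det - (Vb * Vbᵀ * Yb⁻¹).trace + 2 * (Vbᵀ * Yb⁻¹ * V).trace
    - ((Yb⁻¹ - (Vb * Vbᵀ + Yb)⁻¹)ᵀ * (V * Vᵀ + Y)).trace

lemma PosDef.logDetSurrogate_le {Y Yb : Matrix n n ℝ} (hY : Y.PosDef) (hYb : Yb.PosDef)
    (V Vb : Matrix n m ℝ) : logDetSurrogate Vb Yb V Y ≤ Real.log (1 + Y⁻¹ * (V * Vᵀ)).det := by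
  rw [logDetSurrogate, det_one_add_inv_mul_mul_transpose, det_one_add_inv_mul_mul_transpose]
  set S := V * Vᵀ + Y
  set Sb := Vb * Vbᵀ + Yb
  set W := 1 + Vᵀ * Y⁻¹ * V
  set Wb := 1 + Vbᵀ * Yb⁻¹ * Vb
  have hS : S.PosDef := PosDef.posSemidef_add (posSemidef_self_mul_conjTranspose V) hY
  have hSb : Sb.PosDef := PosDef.posSemidef_add (posSemidef_self_mul_conjTranspose Vb) hYb
  have hW : W.PosDef := PosDef.one.add_posSemidef (hY.inv.posSemidef.conjTranspose_mul_mul_same V)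
  have hWb : Wb.PosDef :=
    PosDef.one.add_posSemidef (hYb.inv.posSemidef.conjTranspose_mul_mul_same Vb)
  have hSbu : IsUnit Sb.det := hSb.det_pos.ne'.isUnit
  have hYbu : IsUnit Yb.det := hYb.det_pos.ne'.isUnit
  have hWbV : Wb * (Sb⁻¹ * Vb)ᵀ = Vbᵀ * Yb⁻¹ := by
    rw [transpose_mul, transpose_nonsing_inv, hSb.isHermitian.transpose_eq_self,
      ← Matrix.mul_assoc, ← transpose_mul_inv_mul_mul_transpose_add hYbu,
      mul_nonsing_inv_cancel_right _ _ hSbu]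
  have hresolvent : Sb⁻¹ * Vb * Vbᵀ * Yb⁻¹ = Yb⁻¹ - Sb⁻¹ := by
    rw [Matrix.mul_assoc Sb⁻¹, show Vb * Vbᵀ = Sb - Yb from (add_sub_cancel_right _ _).symm,
      Matrix.mul_sub, nonsing_inv_mul _ hSbu, Matrix.sub_mul, Matrix.one_mul,
      Matrix.mul_nonsing_inv_cancel_right _ _ hYbu]
  have hlogdet := hWb.card_add_log_det_sub_log_det_le_trace_mul_inv hW
  have hsquare := hS.two_mul_trace_sub_trace_le_trace_inv hWb.posSemidef V (Sb⁻¹ * Vb)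
  rw [inv_one_add_transpose_mul_inv_mul V hY.det_pos.ne'.isUnit hS.det_pos.ne'.isUnit,
    Matrix.mul_sub, Matrix.mul_one, trace_sub] at hlogdet
  simp only [← Matrix.mul_assoc, hWbV] at hsquare
  simp only [← Matrix.mul_assoc] at hlogdet
  have htraceWb : Wb.trace = Fintype.card m + (Vb * Vbᵀ * Yb⁻¹).trace := by
    rw [trace_add, trace_one, trace_mul_cycle Vbᵀ]
  have hcross : (Vbᵀ * Yb⁻¹ * S * Sb⁻¹ * Vb).trace = ((Yb⁻¹ - Sb⁻¹)ᵀ * S).trace := by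
    rw [transpose_sub, transpose_nonsing_inv, transpose_nonsing_inv,
      hYb.isHermitian.transpose_eq_self, hSb.isHermitian.transpose_eq_self, ← hresolvent,
      Matrix.mul_assoc, trace_mul_comm]
    simp only [Matrix.mul_assoc]
  linarith

end Matrix

theorem rate_concave_lower_bound_general {n m : ℕ}
    (D Dbar : Matrix (Fin n) (Fin n) ℝ) (H Hbar : Matrix (Fin n) (Fin m) ℝ)
    (P Pbar : Matrix (Fin m) (Fin m) ℝ)
    (hD : D.PosDef) (hDbar : Dbar.PosDef)
    (hP : P.PosSemidef) (hPbar : Pbar.PosSemidef) :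
    (1 / 2 : ℝ) * Real.logb 2 (1 + D⁻¹ * (H * P * Hᵀ)).det ≥
      (1 / 2 : ℝ) * Real.logb 2 (1 + Dbar⁻¹ * (Hbar * Pbar * Hbarᵀ)).det
        - (1 / (2 * Real.log 2)) *
            ((Hbar * hPbar.sqrt) * (Hbar * hPbar.sqrt)ᵀ * Dbar⁻¹).trace
        + (1 / Real.log 2) *
            ((Hbar * hPbar.sqrt)ᵀ * Dbar⁻¹ * (H * hP.sqrt)).trace
        - (1 / (2 * Real.log 2)) *
            ((Dbar⁻¹ - ((Hbar * hPbar.sqrt) * (Hbar * hPbar.sqrt)ᵀ + Dbar)⁻¹)ᵀ *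
              (H * P * Hᵀ + D)).trace := by
  have hsurrogate := hD.logDetSurrogate_le hDbar (H * hP.sqrt) (Hbar * hPbar.sqrt)
  rw [logDetSurrogate] at hsurrogate
  rw [← hP.mul_sqrt_mul_transpose H, ← hPbar.mul_sqrt_mul_transpose Hbar, Real.logb, Real.logb]
  have hlog2 : 0 < Real.log 2 := Real.log_pos one_lt_two
  field_simp
  linarith

/-- Corollary 1 of the paper: concave lower bound (surrogate rate) on
`½ log₂ det (I + D⁻¹ H P Hᵀ)`, obtained from Lemma 2 with
`V = H P^{1/2}`, `Y = D`, `V̄ = H̄ P̄^{1/2}`, `Ȳ = D̄`. -/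
theorem rate_concave_lower_bound {n m : ℕ} (hn : 0 < n) (hm : 0 < m)
    (D Dbar : Matrix (Fin n) (Fin n) ℝ) (H Hbar : Matrix (Fin n) (Fin m) ℝ)
    (P Pbar : Matrix (Fin m) (Fin m) ℝ)
    (hD : D.PosDef) (hDbar : Dbar.PosDef)
    (hP : P.PosSemidef) (hPbar : Pbar.PosSemidef) :
    (1 / 2 : ℝ) * Real.logb 2 (1 + D⁻¹ * (H * P * Hᵀ)).det ≥
      (1 / 2 : ℝ) * Real.logb 2 (1 + Dbar⁻¹ * (Hbar * Pbar * Hbarᵀ)).det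
        - (1 / (2 * Real.log 2)) *
            ((Hbar * hPbar.sqrt) * (Hbar * hPbar.sqrt)ᵀ * Dbar⁻¹).trace
        + (1 / Real.log 2) *
            ((Hbar * hPbar.sqrt)ᵀ * Dbar⁻¹ * (H * hP.sqrt)).trace
        - (1 / (2 * Real.log 2)) *
            ((Dbar⁻¹ - ((Hbar * hPbar.sqrt) * (Hbar * hPbar.sqrt)ᵀ + Dbar)⁻¹)ᵀ *
              (H * P * Hᵀ + D)).trace :=
  rate_concave_lower_bound_general D Dbar H Hbar P Pbar hD hDbar hP hPbar
end
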